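/- The gradient-based contribution function ctrb^g violates the counterfactuality principle (and hence the quantitative counterfactuality principle) with respect to the SD-DFQuAD semantics: there exist an acyclic QBAG G and arguments a, x ∈ A with σ_G(a) = σ_{G↓(A∖{x})}(a) yet ctrb^g_{G,a}(x) ≠ 0. (A witness is the QBAG with A = {a, b, c}, τ(a) = 0.5, τ(b) = 0, τ(c) = 1, and attacks (b,a), (c,b), where σ_G(b) = 0, so σ_G(a) = 0.5 = σ_{G↓(A∖{b})}(a), while ctrb^g_{G,a}(b) = −0.25.) -/

import Mathlib

open Finset

/-- A quantitative bipolar argumentation graph (QBAG): a finite set of arguments,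
an initial strength function, and attack and support relations. -/
structure QBAG where
  args : Finset ℕ
  tau : ℕ → ℝ
  att : Finset (ℕ × ℕ)
  supp : Finset (ℕ × ℕ)

namespace QBAG

/-- The edge relation of the underlying directed graph (attack or support). -/
def edge (G : QBAG) (x y : ℕ) : Prop := (x, y) ∈ G.att ∨ (x, y) ∈ G.supp

/-- Well-formedness: edges live on the arguments, attack and support are disjoint,
and initial strengths lie in [0,1]. -/
def WF (G : QBAG) : Prop :=
  (∀ p ∈ G.att, p.1 ∈ G.args ∧ p.2 ∈ G.args) ∧
  (∀ p ∈ G.supp, p.1 ∈ G.args ∧ p.2 ∈ G.args) ∧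
  Disjoint G.att G.supp ∧
  (∀ a ∈ G.args, G.tau a ∈ Set.Icc (0 : ℝ) 1)

/-- Acyclicity of the directed graph (A, Att ∪ Supp). -/
def Acyclic (G : QBAG) : Prop := ∀ x, ¬ Relation.TransGen G.edge x x

/-- Direct attackers of an argument. -/
def attackers (G : QBAG) (a : ℕ) : Finset ℕ :=
  (G.att.filter (fun p => p.2 = a)).image Prod.fst

/-- Direct supporters of an argument. -/
def supporters (G : QBAG) (a : ℕ) : Finset ℕ :=
  (G.supp.filter (fun p => p.2 = a)).image Prod.fst

/-- Restriction G↓S of a QBAG to a subset S of the arguments. -/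
def restrict (G : QBAG) (S : Finset ℕ) : QBAG where
  args := G.args ∩ S
  tau := G.tau
  att := G.att.filter (fun p => p.1 ∈ S ∧ p.2 ∈ S)
  supp := G.supp.filter (fun p => p.1 ∈ S ∧ p.2 ∈ S)

/-- G⁻: the QBAG G with every attack and support edge pointing into x removed. -/
def dropInto (G : QBAG) (x : ℕ) : QBAG where
  args := G.args
  tau := G.tau
  att := G.att.filter (fun p => p.2 ≠ x)
  supp := G.supp.filter (fun p => p.2 ≠ x)

/-- G[x←ε]: the QBAG G with the initial strength of x replaced by ε. -/
def setTau (G : QBAG) (x : ℕ) (ε : ℝ) : QBAG where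
  args := G.args
  tau := Function.update G.tau x ε
  att := G.att
  supp := G.supp

end QBAG

noncomputable section

/-- Sum aggregation. -/
def sumAgg (G : QBAG) (s : ℕ → ℝ) (a : ℕ) : ℝ :=
  (∑ y ∈ G.supporters a, s y) - (∑ y ∈ G.attackers a, s y)

/-- Product aggregation. -/
def prodAgg (G : QBAG) (s : ℕ → ℝ) (a : ℕ) : ℝ :=
  (∏ y ∈ G.attackers a, (1 - s y)) - (∏ y ∈ G.supporters a, (1 - s y))

/-- Top aggregation. -/
def topAgg (G : QBAG) (s : ℕ → ℝ) (a : ℕ) : ℝ :=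
  (G.supporters a).fold max 0 s - (G.attackers a).fold max 0 s

/-- h for the 2-Max(1) influence function. -/
def h2 (x : ℝ) : ℝ := max 0 x ^ 2 / (1 + max 0 x ^ 2)

/-- h for the 1-Max(1) influence function. -/
def h1 (x : ℝ) : ℝ := max 0 x / (1 + max 0 x)

/-- 2-Max(1) influence function (used by QE). -/
def iotaQE (w s : ℝ) : ℝ := w - w * h2 (-s) + (1 - w) * h2 s

/-- Linear(1) influence function (used by DFQuAD). -/
def iotaLin (w s : ℝ) : ℝ := w - w * max 0 (-s) + (1 - w) * max 0 s

/-- 1-Max(1) influence function (used by SD-DFQuAD). -/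
def iotaSD (w s : ℝ) : ℝ := w - w * h1 (-s) + (1 - w) * h1 s

/-- Euler-based influence function (used by EB and EBT). -/
def iotaEB (w s : ℝ) : ℝ := 1 - (1 - w ^ 2) / (1 + w * Real.exp s)

/-- σ is a modular semantics with aggregation `agg` and influence `iota`:
on every well-formed acyclic QBAG the final strengths satisfy the defining equations. -/
def IsSemantics (agg : QBAG → (ℕ → ℝ) → ℕ → ℝ) (iota : ℝ → ℝ → ℝ)
    (σ : QBAG → ℕ → ℝ) : Prop :=
  ∀ G : QBAG, G.WF → G.Acyclic → ∀ a ∈ G.args, σ G a = iota (G.tau a) (agg G (σ G) a)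

/-- QE semantics. -/
def IsQE (σ : QBAG → ℕ → ℝ) : Prop := IsSemantics sumAgg iotaQE σ

/-- DFQuAD semantics. -/
def IsDF (σ : QBAG → ℕ → ℝ) : Prop := IsSemantics prodAgg iotaLin σ

/-- SD-DFQuAD semantics. -/
def IsSD (σ : QBAG → ℕ → ℝ) : Prop := IsSemantics prodAgg iotaSD σ

/-- EB semantics. -/
def IsEB (σ : QBAG → ℕ → ℝ) : Prop := IsSemantics sumAgg iotaEB σ

/-- EBT semantics. -/
def IsEBT (σ : QBAG → ℕ → ℝ) : Prop := IsSemantics topAgg iotaEB σ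

/-- A gradual semantics assigns final strengths in [0,1] on acyclic QBAGs. -/
def IsGradualSemantics (σ : QBAG → ℕ → ℝ) : Prop :=
  ∀ G : QBAG, G.WF → G.Acyclic → ∀ a ∈ G.args, σ G a ∈ Set.Icc (0 : ℝ) 1

/-- Removal-based contribution: ctrb^r_{G,a}(x) = σ_G(a) − σ_{G↓(A∖{x})}(a). -/
def ctrbR (σ : QBAG → ℕ → ℝ) (G : QBAG) (a x : ℕ) : ℝ :=
  σ G a - σ (G.restrict (G.args.erase x)) a

/-- Intrinsic-removal contribution: ctrb^{ri}_{G,a}(x) = σ_{G⁻}(a) − σ_{G↓(A∖{x})}(a). -/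
def ctrbRI (σ : QBAG → ℕ → ℝ) (G : QBAG) (a x : ℕ) : ℝ :=
  σ (G.dropInto x) a - σ (G.restrict (G.args.erase x)) a

/-- Shapley-based contribution. -/
def ctrbS (σ : QBAG → ℕ → ℝ) (G : QBAG) (a x : ℕ) : ℝ :=
  ∑ X ∈ ((G.args.erase a).erase x).powerset,
    ((X.card.factorial : ℝ) * ((G.args.erase a).card - X.card - 1).factorial /
      (G.args.erase a).card.factorial) *
    (σ (G.restrict (G.args \ X)) a - σ (G.restrict (G.args \ insert x X)) a)

/-- Gradient-based contribution: the derivative at ε = τ(x) (within [0,1]) of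
the map ε ↦ σ_{G[x←ε]}(a). -/
def ctrbG (σ : QBAG → ℕ → ℝ) (G : QBAG) (a x : ℕ) : ℝ :=
  derivWithin (fun ε => σ (G.setTau x ε) a) (Set.Icc (0 : ℝ) 1) (G.tau x)

/-- The contribution existence principle. -/
def ContributionExistence (ctrb : QBAG → ℕ → ℕ → ℝ) (σ : QBAG → ℕ → ℝ) : Prop :=
  ∀ G : QBAG, G.WF → G.Acyclic → ∀ a ∈ G.args,
    σ G a ≠ G.tau a → ∃ x ∈ G.args, x ≠ a ∧ ctrb G a x ≠ 0

/-- The quantitative contribution existence principle. -/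
def QuantContributionExistence (ctrb : QBAG → ℕ → ℕ → ℝ) (σ : QBAG → ℕ → ℝ) : Prop :=
  ∀ G : QBAG, G.WF → G.Acyclic → ∀ a ∈ G.args,
    ∑ x ∈ G.args.erase a, ctrb G a x = σ G a - G.tau a

/-- The strong faithfulness principle. -/
def StrongFaithfulness (ctrb : QBAG → ℕ → ℕ → ℝ) (σ : QBAG → ℕ → ℝ) : Prop :=
  ∀ G : QBAG, G.WF → G.Acyclic → ∀ a ∈ G.args, ∀ x ∈ G.args,
    ∀ ε ∈ Set.Icc (0 : ℝ) 1,
      (ctrb G a x < 0 →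
        (ε < G.tau x → σ G a < σ (G.setTau x ε) a) ∧
        (ε > G.tau x → σ G a > σ (G.setTau x ε) a)) ∧
      (ctrb G a x = 0 → σ G a = σ (G.setTau x ε) a) ∧
      (ctrb G a x > 0 →
        (ε < G.tau x → σ G a > σ (G.setTau x ε) a) ∧
        (ε > G.tau x → σ G a < σ (G.setTau x ε) a))

/-- The local faithfulness principle. -/
def LocalFaithfulness (ctrb : QBAG → ℕ → ℕ → ℝ) (σ : QBAG → ℕ → ℝ) : Prop :=
  ∀ G : QBAG, G.WF → G.Acyclic → ∀ a ∈ G.args, ∀ x ∈ G.args,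
    ∃ δ > 0, ∀ ε ∈ Set.Icc (G.tau x - δ) (G.tau x + δ) ∩ Set.Icc (0 : ℝ) 1,
      (ctrb G a x < 0 →
        (ε < G.tau x → σ G a < σ (G.setTau x ε) a) ∧
        (ε > G.tau x → σ G a > σ (G.setTau x ε) a)) ∧
      (ctrb G a x > 0 →
        (ε < G.tau x → σ G a > σ (G.setTau x ε) a) ∧
        (ε > G.tau x → σ G a < σ (G.setTau x ε) a))

/-- The quantitative local faithfulness principle: the map ε ↦ σ_{G[x←ε]}(a) is
differentiable (within [0,1]) at τ(x) with derivative ctrb_{G,a}(x); equivalently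
σ_{G[x←τ(x)+ε]}(a) = σ_G(a) + ε·ctrb_{G,a}(x) + e(ε) with e(ε)/ε → 0. -/
def QuantLocalFaithfulness (ctrb : QBAG → ℕ → ℕ → ℝ) (σ : QBAG → ℕ → ℝ) : Prop :=
  ∀ G : QBAG, G.WF → G.Acyclic → ∀ a ∈ G.args, ∀ x ∈ G.args,
    HasDerivWithinAt (fun ε => σ (G.setTau x ε) a) (ctrb G a x)
      (Set.Icc (0 : ℝ) 1) (G.tau x)

/-- The counterfactuality principle. -/
def Counterfactuality (ctrb : QBAG → ℕ → ℕ → ℝ) (σ : QBAG → ℕ → ℝ) : Prop :=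
  ∀ G : QBAG, G.WF → G.Acyclic → ∀ a ∈ G.args, ∀ x ∈ G.args,
    (ctrb G a x < 0 → σ G a < σ (G.restrict (G.args.erase x)) a) ∧
    (ctrb G a x = 0 → σ G a = σ (G.restrict (G.args.erase x)) a) ∧
    (ctrb G a x > 0 → σ G a > σ (G.restrict (G.args.erase x)) a)

/-- The quantitative counterfactuality principle. -/
def QuantCounterfactuality (ctrb : QBAG → ℕ → ℕ → ℝ) (σ : QBAG → ℕ → ℝ) : Prop :=
  ∀ G : QBAG, G.WF → G.Acyclic → ∀ a ∈ G.args, ∀ x ∈ G.args,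
    ctrb G a x = σ G a - σ (G.restrict (G.args.erase x)) a

end

/-!
Take the attack chain `c → b → a` (encoded as `2 → 1 → 0`) with `τ(a) = 1/2`, `τ(b) = 0`,
`τ(c) = 1`. Under SD-DFQuAD an argument with a single attacker `y` has strength
`τ / (1 + σ(y))`, so `σ(b) = τ(b) / 2 = 0` and `b` is inert: removing it leaves
`σ(a) = 1/2`. Raising `τ(b)` to `ε`, however, gives `σ(a) = 1 / (2 + ε)`, whose derivative
at `0` is `-1/4`.
-/

namespace QBAG

variable {G : QBAG}

theorem WF.restrict (hG : G.WF) (S : Finset ℕ) : (G.restrict S).WF := by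
  obtain ⟨hatt, hsupp, hdisj, htau⟩ := hG
  refine ⟨fun p hp => ?_, fun p hp => ?_, hdisj.mono (filter_subset _ _) (filter_subset _ _),
    fun a ha => htau a (mem_inter.1 ha).1⟩
  · obtain ⟨hp, h₁, h₂⟩ := mem_filter.1 hp
    exact ⟨mem_inter.2 ⟨(hatt p hp).1, h₁⟩, mem_inter.2 ⟨(hatt p hp).2, h₂⟩⟩
  · obtain ⟨hp, h₁, h₂⟩ := mem_filter.1 hp
    exact ⟨mem_inter.2 ⟨(hsupp p hp).1, h₁⟩, mem_inter.2 ⟨(hsupp p hp).2, h₂⟩⟩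

theorem edge_of_edge_restrict {S : Finset ℕ} {x y : ℕ} (h : (G.restrict S).edge x y) :
    G.edge x y :=
  h.imp (fun h => (mem_filter.1 h).1) (fun h => (mem_filter.1 h).1)

theorem Acyclic.restrict (hG : G.Acyclic) (S : Finset ℕ) : (G.restrict S).Acyclic :=
  fun x h => hG x (Relation.TransGen.mono (fun _ _ => edge_of_edge_restrict) x x h)

theorem acyclic_of_edge_lt (h : ∀ x y, G.edge x y → y < x) : G.Acyclic := by
  have hlt : ∀ x y, Relation.TransGen G.edge x y → y < x := by
    intro x y hxy
    induction hxy with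
    | single hxy => exact h _ _ hxy
    | tail _ hyz ih => exact (h _ _ hyz).trans ih
  exact fun x hx => lt_irrefl x (hlt x x hx)

end QBAG

theorem iotaSD_zero (w : ℝ) : iotaSD w 0 = w := by
  simp [iotaSD, h1]

theorem iotaSD_of_nonpos (w : ℝ) {s : ℝ} (hs : s ≤ 0) : iotaSD w s = w / (1 - s) := by
  have hne : 1 + -s ≠ 0 := by linarith
  simp only [iotaSD, h1, max_eq_left hs, max_eq_right (neg_nonneg.2 hs)]
  rw [← sub_eq_add_neg] at hne ⊢
  field_simp
  ring

section Aggregation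

variable {G : QBAG} {s : ℕ → ℝ} {a : ℕ}

theorem prodAgg_of_attackers_supporters_eq_empty (hatt : G.attackers a = ∅)
    (hsupp : G.supporters a = ∅) : prodAgg G s a = 0 := by
  simp [prodAgg, hatt, hsupp]

theorem prodAgg_of_attackers_eq_singleton {y : ℕ} (hatt : G.attackers a = {y})
    (hsupp : G.supporters a = ∅) : prodAgg G s a = -s y := by
  simp [prodAgg, hatt, hsupp]

end Aggregation

theorem ctrbG_eq_of_hasDerivAt {σ : QBAG → ℕ → ℝ} {G : QBAG} {a x : ℕ} {f : ℝ → ℝ} {f' : ℝ}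
    (hτ : G.tau x ∈ Set.Icc (0 : ℝ) 1)
    (hσf : ∀ ε ∈ Set.Icc (0 : ℝ) 1, σ (G.setTau x ε) a = f ε)
    (hf : HasDerivAt f f' (G.tau x)) : ctrbG σ G a x = f' :=
  (hf.hasDerivWithinAt.congr hσf (hσf _ hτ)).derivWithin (uniqueDiffOn_Icc one_pos _ hτ)

theorem QuantCounterfactuality.counterfactuality {ctrb : QBAG → ℕ → ℕ → ℝ}
    {σ : QBAG → ℕ → ℝ} (h : QuantCounterfactuality ctrb σ) : Counterfactuality ctrb σ := by
  intro G hWF hAc a ha x hx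
  rw [h G hWF hAc a ha x hx]
  exact ⟨sub_neg.1, sub_eq_zero.1, sub_pos.1⟩

theorem not_counterfactuality_of_witness {ctrb : QBAG → ℕ → ℕ → ℝ} {σ : QBAG → ℕ → ℝ}
    (h : ∃ G : QBAG, G.WF ∧ G.Acyclic ∧ ∃ a ∈ G.args, ∃ x ∈ G.args,
      σ G a = σ (G.restrict (G.args.erase x)) a ∧ ctrb G a x ≠ 0) :
    ¬ Counterfactuality ctrb σ := by
  intro hcf
  obtain ⟨G, hWF, hAc, a, ha, x, hx, heq, hne⟩ := h
  obtain ⟨hneg, -, hpos⟩ := hcf G hWF hAc a ha x hx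
  rcases hne.lt_or_gt with hlt | hgt
  · exact (hneg hlt).ne heq
  · exact (hpos hgt).ne' heq

def attackChain (wa wb wc : ℝ) : QBAG where
  args := {0, 1, 2}
  tau := fun n => if n = 0 then wa else if n = 1 then wb else wc
  att := {(1, 0), (2, 1)}
  supp := ∅

section AttackChain

variable {wa wb wc : ℝ}

theorem attackChain_wf (ha : wa ∈ Set.Icc (0 : ℝ) 1) (hb : wb ∈ Set.Icc (0 : ℝ) 1)
    (hc : wc ∈ Set.Icc (0 : ℝ) 1) : (attackChain wa wb wc).WF := by
  refine ⟨?_, ?_, ?_, ?_⟩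
  · simp [attackChain]
  · simp [attackChain]
  · simp [attackChain]
  · simpa [attackChain] using ⟨ha, hb, hc⟩

theorem attackChain_acyclic : (attackChain wa wb wc).Acyclic :=
  QBAG.acyclic_of_edge_lt fun x y h => by
    rcases h with h | h <;> simp [attackChain] at h; omega

theorem attackChain_setTau_one (ε : ℝ) :
    (attackChain wa wb wc).setTau 1 ε = attackChain wa ε wc := by
  simp only [attackChain, QBAG.setTau, QBAG.mk.injEq, true_and, and_true]
  funext n
  by_cases h : n = 1 <;> simp [Function.update, h]

theorem attackChain_attackers_zero : (attackChain wa wb wc).attackers 0 = {1} := by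
  simp only [attackChain, QBAG.attackers]
  decide

theorem attackChain_attackers_one : (attackChain wa wb wc).attackers 1 = {2} := by
  simp only [attackChain, QBAG.attackers]
  decide

theorem attackChain_attackers_two : (attackChain wa wb wc).attackers 2 = ∅ := by
  simp only [attackChain, QBAG.attackers]
  decide

theorem attackChain_supporters (n : ℕ) : (attackChain wa wb wc).supporters n = ∅ := by
  simp [attackChain, QBAG.supporters]

end AttackChain

section SDStrength

variable {σ : QBAG → ℕ → ℝ} {wa wb wc : ℝ}

theorem IsSD.strength_attackChain (hσ : IsSD σ) (ha : wa ∈ Set.Icc (0 : ℝ) 1)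
    (hb : wb ∈ Set.Icc (0 : ℝ) 1) (hc : wc ∈ Set.Icc (0 : ℝ) 1) :
    σ (attackChain wa wb wc) 0 = wa / (1 + wb / (1 + wc)) := by
  have eval := hσ _ (attackChain_wf ha hb hc) attackChain_acyclic
  have hσc : σ (attackChain wa wb wc) 2 = wc := by
    rw [eval 2 (by simp [attackChain]),
      prodAgg_of_attackers_supporters_eq_empty attackChain_attackers_two
        (attackChain_supporters 2), iotaSD_zero]
    simp [attackChain]
  have hσb : σ (attackChain wa wb wc) 1 = wb / (1 + wc) := by
    rw [eval 1 (by simp [attackChain]),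
      prodAgg_of_attackers_eq_singleton attackChain_attackers_one (attackChain_supporters 1),
      hσc, iotaSD_of_nonpos _ (by linarith [hc.1]), sub_neg_eq_add]
    simp [attackChain]
  rw [eval 0 (by simp [attackChain]),
    prodAgg_of_attackers_eq_singleton attackChain_attackers_zero (attackChain_supporters 0),
    hσb, iotaSD_of_nonpos _ (neg_nonpos.2 (div_nonneg hb.1 (by linarith [hc.1]))),
    sub_neg_eq_add]
  simp [attackChain]

theorem IsSD.strength_restrict_attackChain (hσ : IsSD σ) (ha : wa ∈ Set.Icc (0 : ℝ) 1)
    (hb : wb ∈ Set.Icc (0 : ℝ) 1) (hc : wc ∈ Set.Icc (0 : ℝ) 1) :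
    σ ((attackChain wa wb wc).restrict ((attackChain wa wb wc).args.erase 1)) 0 = wa := by
  have hatt : ((attackChain wa wb wc).restrict
      ((attackChain wa wb wc).args.erase 1)).attackers 0 = ∅ := by
    simp [attackChain, QBAG.restrict, QBAG.attackers, Finset.filter_insert]
  have hsupp : ((attackChain wa wb wc).restrict
      ((attackChain wa wb wc).args.erase 1)).supporters 0 = ∅ := by
    simp [attackChain, QBAG.restrict, QBAG.supporters]
  rw [hσ _ ((attackChain_wf ha hb hc).restrict _) (attackChain_acyclic.restrict _) 0
      (by simp [attackChain, QBAG.restrict]), prodAgg_of_attackers_supporters_eq_empty hatt hsupp,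
    iotaSD_zero]
  simp [attackChain, QBAG.restrict]

theorem IsSD.ctrbG_attackChain (hσ : IsSD σ) :
    ctrbG σ (attackChain (1 / 2) 0 1) 0 1 = -1 / 4 := by
  have hderiv : HasDerivAt (fun ε : ℝ => 1 / 2 / (1 + ε / (1 + 1))) (-1 / 4) 0 :=
    ((hasDerivAt_const (0 : ℝ) (1 / 2 : ℝ)).fun_div
      (((hasDerivAt_id' (0 : ℝ)).div_const (1 + 1)).const_add 1) (by norm_num)).congr_deriv
      (by norm_num)
  refine ctrbG_eq_of_hasDerivAt (f := fun ε : ℝ => 1 / 2 / (1 + ε / (1 + 1)))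
    (by norm_num [attackChain]) (fun ε hε => ?_) (by simpa [attackChain] using hderiv)
  rw [attackChain_setTau_one, hσ.strength_attackChain (by norm_num) hε (by norm_num)]

end SDStrength

/-- The gradient-based contribution function violates counterfactuality
(and hence quantitative counterfactuality) w.r.t. the SD-DFQuAD semantics: there exist
an acyclic QBAG G and a, x ∈ A with σ_G(a) = σ_{G↓(A∖{x})}(a) yet ctrb^g_{G,a}(x) ≠ 0. -/
theorem ctrbG_violates_counterfactuality_SD
    (σ : QBAG → ℕ → ℝ) (hσ : IsSD σ) :
    ¬ Counterfactuality (ctrbG σ) σ ∧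
    ¬ QuantCounterfactuality (ctrbG σ) σ ∧
    ∃ G : QBAG, G.WF ∧ G.Acyclic ∧ ∃ a ∈ G.args, ∃ x ∈ G.args,
      σ G a = σ (G.restrict (G.args.erase x)) a ∧ ctrbG σ G a x ≠ 0 := by
  have ha : (1 / 2 : ℝ) ∈ Set.Icc (0 : ℝ) 1 := by norm_num
  have hb : (0 : ℝ) ∈ Set.Icc (0 : ℝ) 1 := by norm_num
  have hc : (1 : ℝ) ∈ Set.Icc (0 : ℝ) 1 := by norm_num
  have hwitness : ∃ G : QBAG, G.WF ∧ G.Acyclic ∧ ∃ a ∈ G.args, ∃ x ∈ G.args,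
      σ G a = σ (G.restrict (G.args.erase x)) a ∧ ctrbG σ G a x ≠ 0 := by
    refine ⟨attackChain (1 / 2) 0 1, attackChain_wf ha hb hc, attackChain_acyclic,
      0, by simp [attackChain], 1, by simp [attackChain], ?_, ?_⟩
    · rw [hσ.strength_attackChain ha hb hc, hσ.strength_restrict_attackChain ha hb hc]
      norm_num
    · rw [hσ.ctrbG_attackChain]
      norm_num
  have hcf := not_counterfactuality_of_witness hwitness
  exact ⟨hcf, fun hq => hcf hq.counterfactuality, hwitness⟩
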